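/- Let J ⊆ ℕ be a finite set, let r ≥ 1 be an integer with r ∈ J and r − 1 ∉ J, and let y = ∏_{j∈J} X (j+1) ∈ B. Then (π_{2^r − 1} ⊗ id)(ψ_B(y)) = 0. (This shows 2^r − 1 ∉ S(y) for the top class y of H_*(Bβ_{2k}; 𝔽₂), where k = Σ_{j∈J} 2^j.) -/

import Mathlib

open MvPolynomial TensorProduct

/-- The field 𝔽₂. -/
abbrev F2 : Type := ZMod 2

/-- The polynomial ring `𝔽₂[X 0, X 1, X 2, …]`, used as a model both for
`H_*(∐ₖ Ratₖ; 𝔽₂) = 𝔽₂[g, g⁻¹Qg, Q(g⁻¹Qg), …]` (the "R" model, where `X 0 = g` and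
`X (i+1) = Qⁱ(g⁻¹Qg)`) and for `H_*(∐ₙ Bβₙ; 𝔽₂) = 𝔽₂[g, Qg, Q²g, …]`
(the "B" model, where `X i = Qⁱg`). -/
abbrev P : Type := MvPolynomial ℕ F2

/-- Weight of the variable `X i` in the braid model `B`: `wt(Qⁱg) = 2^i`. -/
def wB : ℕ → ℕ := fun i => 2 ^ i

/-- Dimension of the variable `X i` in the braid model `B`: `dim(Qⁱg) = 2^i - 1`. -/
def dB : ℕ → ℕ := fun i => 2 ^ i - 1

/-- Weight of the variable `X i` in the Rat model `R`: `wt(g) = 1`,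
`wt(Qⁱ(g⁻¹Qg)) = 2^i`. -/
def wR : ℕ → ℕ := fun i => match i with
  | 0 => 1
  | j + 1 => 2 ^ j

/-- Dimension of the variable `X i` in the Rat model `R`: `dim(g) = 0`,
`dim(Qⁱ(g⁻¹Qg)) = 2^(i+1) - 1`. -/
def dR : ℕ → ℕ := fun i => match i with
  | 0 => 0
  | j + 1 => 2 ^ (j + 1) - 1

/-- The weight (resp. dimension) of a monomial with exponent vector `m`: the sum,
with multiplicity, of the weights (resp. dimensions) `w i` of its variables. -/
def mwt (w : ℕ → ℕ) (m : ℕ →₀ ℕ) : ℕ := m.sum fun i e => e * w i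

/-- A polynomial is homogeneous of weight (resp. dimension) `n` with respect to the
variable-weight function `w` if every monomial in its support has weight
(resp. dimension) `n`. -/
def Homog (w : ℕ → ℕ) (n : ℕ) (x : P) : Prop := ∀ m ∈ x.support, mwt w m = n

/-- The 𝔽₂-linear span of the monomials of weight `n`. -/
noncomputable def spanWt (w : ℕ → ℕ) (n : ℕ) : Submodule F2 P :=
  Submodule.span F2 {p : P | ∃ m : ℕ →₀ ℕ, mwt w m = n ∧ p = monomial m 1}

/-- The image `N ⊗ M` inside `P ⊗ P` of two submodules `N, M ⊆ P`. -/
noncomputable def tensorSub (N M : Submodule F2 P) : Submodule F2 (P ⊗[F2] P) :=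
  Submodule.span F2 {t : P ⊗[F2] P | ∃ a ∈ N, ∃ b ∈ M, t = a ⊗ₜ[F2] b}

/-- `Q` is the Araki–Kudo operation on the Rat model: the 𝔽₂-linear map with
`Q(X 0) = X 0 · X 1`, `Q(X (i+1)) = X (i+2)`, and the Cartan formula
`Q(uv) = u²Q(v) + Q(u)v²`. -/
def IsQ (Q : P →ₗ[F2] P) : Prop :=
  Q (X 0) = X 0 * X 1 ∧ (∀ i : ℕ, Q (X (i + 1)) = X (i + 2)) ∧
    ∀ u v : P, Q (u * v) = u ^ 2 * Q v + Q u * v ^ 2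

/-- `ψ` is the coproduct on the braid model `B`: the 𝔽₂-algebra map with
`ψ(g) = g ⊗ g` and `ψ(Qⁱg) = g^(2^i) ⊗ Qⁱg + Qⁱg ⊗ g^(2^i)` for `i ≥ 1`. -/
def IsPsiB (ψ : P →ₐ[F2] P ⊗[F2] P) : Prop :=
  ψ (X 0) = X 0 ⊗ₜ[F2] X 0 ∧
    ∀ i : ℕ, 1 ≤ i →
      ψ (X i) = ((X 0) ^ (2 ^ i)) ⊗ₜ[F2] (X i) + (X i) ⊗ₜ[F2] ((X 0) ^ (2 ^ i))

/-- `ψ` is the coproduct on the Rat model `R` (with Araki–Kudo operation `Q`):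
the 𝔽₂-algebra map with `ψ(g) = g ⊗ g`, `ψ(g⁻¹Qg) = g ⊗ g⁻¹Qg + g⁻¹Qg ⊗ g`, and
`ψ(Qⁱ(g⁻¹Qg)) = g^(2^i) ⊗ Qⁱ(g⁻¹Qg) + Qⁱg ⊗ (g⁻¹Qg)^(2^i) + (g⁻¹Qg)^(2^i) ⊗ Qⁱg
+ Qⁱ(g⁻¹Qg) ⊗ g^(2^i)` for `i ≥ 1`, where `Qⁱg = Qⁱ(X 0)`. -/
def IsPsiR (Q : P →ₗ[F2] P) (ψ : P →ₐ[F2] P ⊗[F2] P) : Prop :=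
  ψ (X 0) = X 0 ⊗ₜ[F2] X 0 ∧
  ψ (X 1) = X 0 ⊗ₜ[F2] X 1 + X 1 ⊗ₜ[F2] X 0 ∧
  ∀ i : ℕ, 1 ≤ i →
    ψ (X (i + 1)) =
      ((X 0) ^ (2 ^ i)) ⊗ₜ[F2] (X (i + 1))
      + ((⇑Q)^[i] (X 0)) ⊗ₜ[F2] ((X 1) ^ (2 ^ i))
      + ((X 1) ^ (2 ^ i)) ⊗ₜ[F2] ((⇑Q)^[i] (X 0))
      + (X (i + 1)) ⊗ₜ[F2] ((X 0) ^ (2 ^ i))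

/-- `π` is the family of projections: `π s` is the 𝔽₂-linear endomorphism fixing
every monomial of dimension `s` (with respect to the variable-dimension function
`dimv`) and annihilating every monomial of other dimensions. -/
def IsPi (dimv : ℕ → ℕ) (π : ℕ → P →ₗ[F2] P) : Prop :=
  ∀ (s : ℕ) (m : ℕ →₀ ℕ) (c : F2),
    π s (monomial m c) = if mwt dimv m = s then monomial m c else 0

/-
Under `ψ_B` each factor `X (j+1)` of `y` splits as `g^(2^(j+1)) ⊗ X (j+1) + X (j+1) ⊗ g^(2^(j+1))`,
so every term of `ψ_B(y)` has as left factor a monomial `g^a · ∏_{j ∈ K} X (j+1)` with `K ⊆ J`,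
of dimension `∑_{j ∈ K} (2^(j+1) − 1)` because `g` has dimension `0`. Such a sum equals
`2^r − 1` only if `r − 1 ∈ K`: its largest term `2^(M+1) − 1` bounds it below, and the whole sum
stays below `2^(M+2) − 1`, which forces `r = M + 1`.
-/

open Finset

theorem sub_one_mem_of_sum_two_pow_succ_sub_one_eq {K : Finset ℕ} {r : ℕ} (hr : 1 ≤ r)
    (h : ∑ j ∈ K, (2 ^ (j + 1) - 1) = 2 ^ r - 1) : r - 1 ∈ K := by
  have hK : K.Nonempty := nonempty_of_sum_ne_zero <| h ▸ Nat.sub_ne_zero_of_lt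
    (Nat.one_lt_two_pow (Nat.one_le_iff_ne_zero.mp hr))
  set M := K.max' hK
  have hM : M ∈ K := K.max'_mem hK
  have lower : 2 ^ (M + 1) - 1 ≤ 2 ^ r - 1 :=
    h ▸ single_le_sum (f := fun j => 2 ^ (j + 1) - 1) (fun _ _ => Nat.zero_le _) hM
  have upper : 2 ^ r - 1 < ∑ j ∈ K, 2 ^ (j + 1) :=
    h ▸ sum_lt_sum_of_nonempty hK fun j _ => Nat.sub_lt Nat.one_le_two_pow one_pos
  have geom : ∑ j ∈ K, 2 ^ (j + 1) < 2 ^ (M + 2) :=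
    calc ∑ j ∈ K, 2 ^ (j + 1) = 2 * ∑ j ∈ K, 2 ^ j := by rw [mul_sum]; simp only [pow_succ']
      _ < 2 * 2 ^ (M + 1) :=
        Nat.mul_lt_mul_of_pos_left (Nat.geomSum_lt le_rfl fun j hj =>
          Nat.lt_succ_of_le (K.le_max' j hj)) two_pos
      _ = 2 ^ (M + 2) := by ring
  have h1 : 1 ≤ 2 ^ (M + 1) := Nat.one_le_two_pow
  have h2 : 1 ≤ 2 ^ r := Nat.one_le_two_pow
  have hMr : M + 1 ≤ r :=
    (Nat.pow_le_pow_iff_right one_lt_two).mp (show 2 ^ (M + 1) ≤ 2 ^ r by omega)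
  have hrM : r < M + 2 :=
    (Nat.pow_lt_pow_iff_right one_lt_two).mp (show 2 ^ r < 2 ^ (M + 2) by omega)
  rwa [show r - 1 = M by omega]

theorem Algebra.TensorProduct.prod_tmul {R A B ι : Type*} [CommSemiring R] [CommSemiring A]
    [CommSemiring B] [Algebra R A] [Algebra R B] (s : Finset ι) (f : ι → A) (g : ι → B) :
    ∏ i ∈ s, f i ⊗ₜ[R] g i = (∏ i ∈ s, f i) ⊗ₜ[R] (∏ i ∈ s, g i) := by
  induction s using Finset.cons_induction with
  | empty => simp [Algebra.TensorProduct.one_def]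
  | cons i s hi ih => simp only [prod_cons, ih, Algebra.TensorProduct.tmul_mul_tmul]

theorem mwt_eq_weight (w : ℕ → ℕ) (m : ℕ →₀ ℕ) : mwt w m = Finsupp.weight w m := rfl

theorem X_zero_pow_mul_prod_X_succ {R : Type*} [CommSemiring R] (a : ℕ) (K : Finset ℕ) :
    (X 0 ^ a * ∏ j ∈ K, X (j + 1) : MvPolynomial ℕ R) =
      monomial (Finsupp.single 0 a + ∑ j ∈ K, Finsupp.single (j + 1) 1) 1 := by
  simp only [X, ← monomial_sum_one]
  rw [monomial_pow, monomial_mul, one_pow, one_mul, Finsupp.smul_single_one]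

theorem mwt_dB_single_zero_add_sum (a : ℕ) (K : Finset ℕ) :
    mwt dB (Finsupp.single 0 a + ∑ j ∈ K, Finsupp.single (j + 1) 1) =
      ∑ j ∈ K, (2 ^ (j + 1) - 1) := by
  simp [mwt_eq_weight, Finsupp.weight_single, dB]

theorem IsPsiB.map_prod_X_succ {ψ : P →ₐ[F2] P ⊗[F2] P} (hψ : IsPsiB ψ) (J : Finset ℕ) :
    ψ (∏ j ∈ J, X (j + 1)) = ∑ T ∈ J.powerset,
      (X 0 ^ (∑ j ∈ T, 2 ^ (j + 1)) * ∏ j ∈ J \ T, X (j + 1)) ⊗ₜ[F2]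
        ((∏ j ∈ T, X (j + 1)) * X 0 ^ (∑ j ∈ J \ T, 2 ^ (j + 1))) := by
  classical
  simp only [map_prod, hψ.2 _ (Nat.succ_pos _), prod_add, Algebra.TensorProduct.prod_tmul,
    Algebra.TensorProduct.tmul_mul_tmul, prod_pow_eq_pow_sum]

theorem psiB_component_vanishes_general (J : Finset ℕ) (r : ℕ) (hr : 1 ≤ r)
    (hrpred : r - 1 ∉ J)
    (ψ : P →ₐ[F2] P ⊗[F2] P) (hψ : IsPsiB ψ)
    (π : ℕ → P →ₗ[F2] P) (hπ : IsPi dB π)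
    (y : P) (hy : y = ∏ j ∈ J, X (j + 1)) :
    TensorProduct.map (π (2 ^ r - 1)) (LinearMap.id : P →ₗ[F2] P) (ψ y) = 0 := by
  rw [hy, hψ.map_prod_X_succ, map_sum]
  refine sum_eq_zero fun T _ => ?_
  rw [TensorProduct.map_tmul, X_zero_pow_mul_prod_X_succ, hπ, mwt_dB_single_zero_add_sum,
    if_neg, zero_tmul]
  exact fun h => hrpred (sdiff_subset (sub_one_mem_of_sum_two_pow_succ_sub_one_eq hr h))

/-- Let `J ⊆ ℕ` be finite, `r ≥ 1` with `r ∈ J` and `r − 1 ∉ J`,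
and `y = ∏_{j∈J} X (j+1) ∈ B`.  Then `(π_{2^r−1} ⊗ id)(ψ_B(y)) = 0`, i.e.
`2^r − 1 ∉ S(y)` for the top class `y` of `H_*(Bβ_{2k}; 𝔽₂)`, `k = Σ_{j∈J} 2^j`. -/
theorem psiB_component_vanishes (J : Finset ℕ) (r : ℕ) (hr : 1 ≤ r)
    (hrJ : r ∈ J) (hrpred : r - 1 ∉ J)
    (ψ : P →ₐ[F2] P ⊗[F2] P) (hψ : IsPsiB ψ)
    (π : ℕ → P →ₗ[F2] P) (hπ : IsPi dB π)
    (y : P) (hy : y = ∏ j ∈ J, X (j + 1)) :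
    TensorProduct.map (π (2 ^ r - 1)) (LinearMap.id : P →ₗ[F2] P) (ψ y) = 0 :=
  psiB_component_vanishes_general J r hr hrpred ψ hψ π hπ y hy
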